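/- arXiv:1304.6496 — 5 statements merged into one kernel-verified Lean document; each statement's English description precedes it below -/
import Mathlib

section
/- Let $p, q$ be relatively prime positive integers, let $X$ and $X'$ be binary sequences of period $p$, and $Y, Y'$ binary sequences of period $q$. Define the product sequence $X \otimes Y$ as the length-$pq$ binary sequence whose value at position $l$ is $X(l \bmod p) \cdot Y(l \bmod q)$. If $X \otimes Y = X' \otimes Y'$ and $X \otimes Y$ is not the all-zero sequence, then $X = X'$ and $Y = Y'$. -/
/-- The product sequence of `X` (period `p`) and `Y` (period `q`), with `p, q`
coprime, has value `X(l mod p) * Y(l mod q)` at position `l`.  If two product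
sequences agree and are not identically zero, the factors agree. -/
theorem product_sequence_unique_factorization (p q : ℕ) (hp : 0 < p) (hq : 0 < q)
    (hpq : Nat.Coprime p q) (X X' : ℕ → Bool) (Y Y' : ℕ → Bool)
    (hXper : ∀ l, X (l % p) = X l) (hX'per : ∀ l, X' (l % p) = X' l)
    (hYper : ∀ l, Y (l % q) = Y l) (hY'per : ∀ l, Y' (l % q) = Y' l)
    (heq : ∀ l, (X (l % p) && Y (l % q)) = (X' (l % p) && Y' (l % q)))
    (hnz : ∃ l, (X (l % p) && Y (l % q)) = true) :
    X = X' ∧ Y = Y' := by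
  obtain ⟨l0, h0⟩ := hnz
  rw [Bool.and_eq_true] at h0
  obtain ⟨hXa, hYb⟩ := h0
  have h0' := (heq l0).symm.trans (by rw [hXa, hYb, Bool.true_and])
  rw [Bool.and_eq_true] at h0'
  obtain ⟨hX'a, hY'b⟩ := h0'
  constructor
  · funext l
    obtain ⟨k, hk1, hk2⟩ := Nat.chineseRemainder hpq l l0
    have h := heq k
    rw [show k % p = l % p from hk1, show k % q = l0 % q from hk2,
        hYb, hY'b, Bool.and_true, Bool.and_true] at h
    rw [← hXper l, ← hX'per l, h]
  · funext l
    obtain ⟨k, hk1, hk2⟩ := Nat.chineseRemainder hpq l0 l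
    have h := heq k
    rw [show k % p = l0 % p from hk1, show k % q = l % q from hk2,
        hXa, hX'a, Bool.true_and, Bool.true_and] at h
    rw [← hYper l, ← hY'per l, h]
end

section
/- Let $p$ be a prime and $q \ge 2p-1$ an integer relatively prime to $p$. For $0 \le g, g' < p$ with $g \ne g'$, and for any integer shift $\tau$, the Hamming cross-correlation $H(S_g, S_{g'})(\tau) = \sum_{l=0}^{pq-1} S_g(l) S_{g'}(l+\tau \bmod pq)$ is at most 1. -/
private lemma crt_aux (p q τ l j j' g g' : ℕ) (hjlt : j < q) (hj'lt : j' < q)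
    (hjp : l % p = (j * g) % p) (hjq : l % q = j)
    (hj'p : ((l + τ) % (p * q)) % p = (j' * g') % p)
    (hj'q : ((l + τ) % (p * q)) % q = j') :
    (j + τ ≡ j' [MOD q]) ∧ (j * g + τ ≡ j' * g' [MOD p]) := by
  have hmp : ((l + τ) % (p * q)) % p = (l + τ) % p :=
    Nat.mod_mod_of_dvd _ (dvd_mul_right p q)
  have hmq : ((l + τ) % (p * q)) % q = (l + τ) % q :=
    Nat.mod_mod_of_dvd _ (dvd_mul_left q p)
  have hLq : l ≡ j [MOD q] := by
    show l % q = j % q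
    rw [hjq, Nat.mod_eq_of_lt hjlt]
  have hLp : l ≡ j * g [MOD p] := hjp
  constructor
  · have h1 : l + τ ≡ j' [MOD q] := by
      show (l + τ) % q = j' % q
      rw [← hmq, hj'q, Nat.mod_eq_of_lt hj'lt]
    exact (hLq.add_right τ).symm.trans h1
  · have h2 : l + τ ≡ j' * g' [MOD p] := by
      show (l + τ) % p = (j' * g') % p
      rw [← hmp, hj'p]
    exact (hLp.add_right τ).symm.trans h2

/-- For distinct generators `g ≠ g'`, the Hamming cross-correlation of the CRT
sequences `S_g` and `S_{g'}` at any shift `τ` is at most 1. -/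
theorem crt_cross_correlation_le_one (p q : ℕ) (hp : p.Prime) (hq : 2 * p - 1 ≤ q)
    (hpq : Nat.Coprime p q) (g g' : ℕ) (hg : g < p) (hg' : g' < p) (hne : g ≠ g')
    (τ : ℕ) :
    ((Finset.range (p * q)).filter
      (fun l =>
        (∃ j ∈ Finset.range p, l % p = (j * g) % p ∧ l % q = j) ∧
        (∃ j ∈ Finset.range p,
          ((l + τ) % (p * q)) % p = (j * g') % p ∧ ((l + τ) % (p * q)) % q = j))).card
      ≤ 1 := by
  haveI := Fact.mk hp
  have hp2 : 2 ≤ p := hp.two_le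
  have hpq' : p ≤ q := by omega
  rw [Finset.card_le_one]
  intro l1 h1 l2 h2
  simp only [Finset.mem_filter, Finset.mem_range] at h1 h2
  obtain ⟨hl1, ⟨j1, hj1, hj1p, hj1q⟩, ⟨j1', hj1', hj1'p, hj1'q⟩⟩ := h1
  obtain ⟨hl2, ⟨j2, hj2, hj2p, hj2q⟩, ⟨j2', hj2', hj2'p, hj2'q⟩⟩ := h2
  obtain ⟨cq1, cp1⟩ := crt_aux p q τ l1 j1 j1' g g' (by omega) (by omega) hj1p hj1q hj1'p hj1'q
  obtain ⟨cq2, cp2⟩ := crt_aux p q τ l2 j2 j2' g g' (by omega) (by omega) hj2p hj2q hj2'p hj2'q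
  -- From the mod-q congruences: j1 + j2' = j2 + j1' as integers
  have hsum : j1' + j2 = j2' + j1 := by
    have c : j1' + j2 ≡ j2' + j1 [MOD q] := by
      have a1 : j1' + j2 ≡ (j1 + τ) + j2 [MOD q] := (cq1.symm.add_right j2)
      have a2 : j2' + j1 ≡ (j2 + τ) + j1 [MOD q] := (cq2.symm.add_right j1)
      have e : j1 + τ + j2 = j2 + τ + j1 := by ring
      exact a1.trans (by rw [e]; exact a2.symm)
    exact Nat.ModEq.eq_of_lt_of_lt c (by omega) (by omega)
  -- Work in ZMod p to conclude j1 = j2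
  have hj12 : j1 = j2 := by
    have z1 : ((j1 * g + τ : ℕ) : ZMod p) = ((j1' * g' : ℕ) : ZMod p) :=
      (ZMod.natCast_eq_natCast_iff _ _ _).mpr cp1
    have z2 : ((j2 * g + τ : ℕ) : ZMod p) = ((j2' * g' : ℕ) : ZMod p) :=
      (ZMod.natCast_eq_natCast_iff _ _ _).mpr cp2
    have zs : ((j1' + j2 : ℕ) : ZMod p) = ((j2' + j1 : ℕ) : ZMod p) := by rw [hsum]
    push_cast at z1 z2 zs
    have key : ((j1 : ZMod p) - j2) * ((g : ZMod p) - g') = 0 := by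
      have : (j1' : ZMod p) - j2' = (j1 : ZMod p) - j2 := by linear_combination zs
      linear_combination z1 - z2 + (g' : ZMod p) * this
    have hgg' : (g : ZMod p) ≠ (g' : ZMod p) := by
      intro h
      have := (ZMod.natCast_eq_natCast_iff _ _ _).mp h
      have : g % p = g' % p := this
      rw [Nat.mod_eq_of_lt hg, Nat.mod_eq_of_lt hg'] at this
      exact hne this
    have : (j1 : ZMod p) - j2 = 0 := by
      rcases mul_eq_zero.mp key with h | h
      · exact h
      · exact absurd (by linear_combination h) hgg'
    have : (j1 : ZMod p) = j2 := by linear_combination this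
    have := (ZMod.natCast_eq_natCast_iff _ _ _).mp this
    have : j1 % p = j2 % p := this
    rwa [Nat.mod_eq_of_lt hj1, Nat.mod_eq_of_lt hj2] at this
  -- Now l1 ≡ l2 mod p and mod q, hence mod p*q, hence equal
  have hmodp : l1 ≡ l2 [MOD p] := by
    show l1 % p = l2 % p
    rw [hj1p, hj2p, hj12]
  have hmodq : l1 ≡ l2 [MOD q] := by
    show l1 % q = l2 % q
    rw [hj1q, hj2q, hj12]
  have hpqmod : l1 ≡ l2 [MOD p * q] :=
    (Nat.modEq_and_modEq_iff_modEq_mul hpq).mp ⟨hmodp, hmodq⟩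
  have := hpqmod
  rwa [Nat.ModEq, Nat.mod_eq_of_lt hl1, Nat.mod_eq_of_lt hl2] at this
end

section
/- Let $p$ be a prime and $q \ge 2p-1$ relatively prime to $p$. Let $S_*$ be the binary sequence of period $pq$ with characteristic set $\mathcal{I}_* = \{ l : 0 \le l < pq, \; l \equiv j \pmod p \text{ and } l \equiv 0 \pmod q \text{ for some } 0 \le j < p \}$, and for $g \in \{0\} \cup \{2,\ldots,p-1\}$ let $S_g$ be the CRT sequence with characteristic set $\mathcal{I}_g$. Then for any two distinct sequences in this collection $\mathcal{C}_0(p,q)$ and any cyclic shift $\tau$, their Hamming cross-correlation is at most 1. -/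
/-- Membership in the characteristic set `I_g` of the CRT sequence `S_g`. -/
def igMem (p q g l : ℕ) : Bool :=
  (List.range p).any fun j => decide (l % p = (j * g) % p ∧ l % q = j)

/-- Membership in the characteristic set `I_*` of the sequence `S_*`. -/
def istarMem (p q l : ℕ) : Bool :=
  (List.range p).any fun j => decide (l % p = j ∧ l % q = 0)

/-- The characteristic function of a member of `C_0(p,q)`: `none` stands for
`S_*` and `some g` for the CRT sequence `S_g`. -/
def c0Mem (p q : ℕ) (o : Option ℕ) (l : ℕ) : Bool :=
  o.elim (istarMem p q l) (fun g => igMem p q g l)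

/-- An index is a valid member of `C_0(p,q)` if it is `S_*` or `S_g` with
`g ∈ {0} ∪ {2, …, p-1}`. -/
def c0Valid (p : ℕ) (o : Option ℕ) : Prop :=
  o.elim True (fun g => g = 0 ∨ (2 ≤ g ∧ g < p))

lemma igMem_iff {p q g l : ℕ} (hpq : p ≤ q) :
    igMem p q g l = true ↔ l % q < p ∧ l % p = (l % q * g) % p := by
  simp only [igMem, List.any_eq_true, List.mem_range, decide_eq_true_eq]
  constructor
  · rintro ⟨j, hj, h1, h2⟩
    exact ⟨h2 ▸ hj, h2 ▸ h1⟩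
  · rintro ⟨h1, h2⟩
    exact ⟨l % q, h1, h2, rfl⟩

lemma istarMem_iff {p q l : ℕ} (hp : 0 < p) :
    istarMem p q l = true ↔ l % q = 0 := by
  simp only [istarMem, List.any_eq_true, List.mem_range, decide_eq_true_eq]
  constructor
  · rintro ⟨j, hj, h1, h2⟩; exact h2
  · intro h; exact ⟨l % p, Nat.mod_lt _ hp, rfl, h⟩

lemma cast_of_mod_eq {p a b : ℕ} (h : a % p = b % p) : (a : ZMod p) = (b : ZMod p) := by
  have := congrArg (Nat.cast (R := ZMod p)) h
  simpa [ZMod.natCast_mod] using this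

lemma zmod_cancel {p : ℕ} [Fact p.Prime] {g g' : ZMod p} (hgg : g ≠ g') {j1 j2 c t : ZMod p}
    (h1 : j1 * g + t = (j1 + c) * g') (h2 : j2 * g + t = (j2 + c) * g') : j1 = j2 := by
  have h : j1 * (g - g') = j2 * (g - g') := by ring_nf; linear_combination h1 - h2
  exact mul_right_cancel₀ (sub_ne_zero.mpr hgg) h

/-- Any two distinct sequences of `C_0(p,q)` have Hamming cross-correlation at
most 1 at every cyclic shift `τ`. -/
theorem c0_cross_correlation_le_one (p q : ℕ) (hp : p.Prime) (hq : 2 * p - 1 ≤ q)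
    (hpq : Nat.Coprime p q) (a b : Option ℕ) (ha : c0Valid p a) (hb : c0Valid p b)
    (hab : a ≠ b) (τ : ℕ) :
    ((Finset.range (p * q)).filter
      (fun l => c0Mem p q a l = true ∧ c0Mem p q b ((l + τ) % (p * q)) = true)).card
      ≤ 1 := by
  have hp2 := hp.two_le
  have hpos : 0 < p := by omega
  have hpq' : p ≤ q := by omega
  have hq0 : 0 < q := by omega
  haveI : Fact p.Prime := ⟨hp⟩
  rw [Finset.card_le_one]
  intro l1 hl1 l2 hl2
  simp only [Finset.mem_filter, Finset.mem_range] at hl1 hl2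
  obtain ⟨hl1r, ha1, hb1⟩ := hl1
  obtain ⟨hl2r, ha2, hb2⟩ := hl2
  have hmodp : ∀ x : ℕ, x % (p * q) % p = x % p := fun x => Nat.mod_mod_of_dvd x (dvd_mul_right p q)
  have hmodq : ∀ x : ℕ, x % (p * q) % q = x % q := fun x => Nat.mod_mod_of_dvd x (dvd_mul_left q p)
  have key : l1 % p = l2 % p → l1 % q = l2 % q → l1 = l2 := by
    intro h1 h2
    have h3 : l1 % (p * q) = l2 % (p * q) := (Nat.modEq_and_modEq_iff_modEq_mul hpq).mp ⟨h1, h2⟩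
    rwa [Nat.mod_eq_of_lt hl1r, Nat.mod_eq_of_lt hl2r] at h3
  match a, b with
  | none, none => exact absurd rfl hab
  | none, some g =>
    have ha1' : l1 % q = 0 := (istarMem_iff hpos).mp ha1
    have ha2' : l2 % q = 0 := (istarMem_iff hpos).mp ha2
    have hb1' := (igMem_iff (g := g) hpq').mp hb1
    have hb2' := (igMem_iff (g := g) hpq').mp hb2
    rw [hmodp, hmodq] at hb1' hb2'
    have hq1 : (l1 + τ) % q = (l2 + τ) % q := by
      rw [Nat.add_mod l1, Nat.add_mod l2, ha1', ha2']
    have hp1 : (l1 + τ) % p = (l2 + τ) % p := by rw [hb1'.2, hb2'.2, hq1]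
    have hqq : l1 % q = l2 % q := by rw [ha1', ha2']
    have hpp : l1 % p = l2 % p := Nat.ModEq.add_right_cancel' τ hp1
    exact key hpp hqq
  | some g, none =>
    have ha1' := (igMem_iff (g := g) hpq').mp ha1
    have ha2' := (igMem_iff (g := g) hpq').mp ha2
    have hb1' : (l1 + τ) % (p * q) % q = 0 := (istarMem_iff hpos).mp hb1
    have hb2' : (l2 + τ) % (p * q) % q = 0 := (istarMem_iff hpos).mp hb2
    rw [hmodq] at hb1' hb2'
    have hq1 : (l1 + τ) % q = (l2 + τ) % q := by rw [hb1', hb2']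
    have hqq : l1 % q = l2 % q := Nat.ModEq.add_right_cancel' τ hq1
    have hpp : l1 % p = l2 % p := by rw [ha1'.2, ha2'.2, hqq]
    exact key hpp hqq
  | some g, some g' =>
    have hav : g = 0 ∨ (2 ≤ g ∧ g < p) := ha
    have hbv : g' = 0 ∨ (2 ≤ g' ∧ g' < p) := hb
    have hg : g < p := by omega
    have hg' : g' < p := by omega
    have hgg : g ≠ g' := fun h => hab (by rw [h])
    have ha1' := (igMem_iff (g := g) hpq').mp ha1
    have ha2' := (igMem_iff (g := g) hpq').mp ha2
    have hb1' := (igMem_iff (g := g') hpq').mp hb1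
    have hb2' := (igMem_iff (g := g') hpq').mp hb2
    rw [hmodp, hmodq] at hb1' hb2'
    set t := τ % q with ht
    have htq : t < q := Nat.mod_lt _ hq0
    have hj1 : (l1 + τ) % q = (l1 % q + t) % q := by rw [Nat.add_mod]
    have hj2 : (l2 + τ) % q = (l2 % q + t) % q := by rw [Nat.add_mod]
    -- type analysis
    have hshift : ∀ j j' : ℕ, j < p → j' < p → j' = (j + t) % q →
        (j' = j + t ∨ j' + q = j + t) := by
      intro j j' hjp hj'p h
      rcases lt_or_ge (j + t) q with hlt | hge
      · left; rw [h, Nat.mod_eq_of_lt hlt]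
      · right
        have h2 : (j + t) % q = j + t - q := by
          rw [Nat.mod_eq_sub_mod hge, Nat.mod_eq_of_lt (by omega)]
        omega
    have hs1 := hshift (l1 % q) ((l1 + τ) % q) ha1'.1 hb1'.1 hj1
    have hs2 := hshift (l2 % q) ((l2 + τ) % q) ha2'.1 hb2'.1 hj2
    -- ZMod p equations
    have e1 : ((l1 % q : ℕ) : ZMod p) * g + τ = ((l1 + τ) % q : ℕ) * g' := by
      have c1 : (l1 : ZMod p) = (l1 % q : ℕ) * g := by
        have := cast_of_mod_eq ha1'.2
        push_cast at this ⊢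
        simpa [ZMod.natCast_mod] using this
      have c2 : (l1 : ZMod p) + τ = ((l1 + τ) % q : ℕ) * g' := by
        have := cast_of_mod_eq hb1'.2
        push_cast at this ⊢
        simpa [ZMod.natCast_mod] using this
      rw [← c1, c2]
    have e2 : ((l2 % q : ℕ) : ZMod p) * g + τ = ((l2 + τ) % q : ℕ) * g' := by
      have c1 : (l2 : ZMod p) = (l2 % q : ℕ) * g := by
        have := cast_of_mod_eq ha2'.2
        push_cast at this ⊢
        simpa [ZMod.natCast_mod] using this
      have c2 : (l2 : ZMod p) + τ = ((l2 + τ) % q : ℕ) * g' := by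
        have := cast_of_mod_eq hb2'.2
        push_cast at this ⊢
        simpa [ZMod.natCast_mod] using this
      rw [← c1, c2]
    have hggz : (g : ZMod p) ≠ (g' : ZMod p) := by
      intro h
      apply hgg
      have := congrArg ZMod.val h
      rwa [ZMod.val_cast_of_lt hg, ZMod.val_cast_of_lt hg'] at this
    have hjz : ((l1 % q : ℕ) : ZMod p) = ((l2 % q : ℕ) : ZMod p) := by
      rcases hs1 with h1 | h1 <;> rcases hs2 with h2 | h2
      · -- both type 1, c = t
        refine zmod_cancel (c := (t : ZMod p)) (t := (τ : ZMod p)) hggz ?_ ?_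
        · rw [e1, h1]; push_cast; ring
        · rw [e2, h2]; push_cast; ring
      · exfalso; omega
      · exfalso; omega
      · -- both type 2, c = t - q
        refine zmod_cancel (c := (t : ZMod p) - (q : ZMod p)) (t := (τ : ZMod p)) hggz ?_ ?_
        · rw [e1]
          have : (((l1 + τ) % q : ℕ) : ZMod p) + q = (l1 % q : ℕ) + t := by
            exact_mod_cast congrArg (Nat.cast (R := ZMod p)) h1
          linear_combination (norm := ring_nf) (g' : ZMod p) * this
        · rw [e2]
          have : (((l2 + τ) % q : ℕ) : ZMod p) + q = (l2 % q : ℕ) + t := by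
            exact_mod_cast congrArg (Nat.cast (R := ZMod p)) h2
          linear_combination (norm := ring_nf) (g' : ZMod p) * this
    have hqq : l1 % q = l2 % q := by
      have := congrArg ZMod.val hjz
      rwa [ZMod.val_cast_of_lt ha1'.1, ZMod.val_cast_of_lt ha2'.1] at this
    have hpp : l1 % p = l2 % p := by rw [ha1'.2, ha2'.2, hqq]
    exact key hpp hqq
end

section
/- Let $p$ be a prime and set $q = 2p-1$. For any sequence $S$ in the set $\mathcal{C}_0(p, 2p-1)$ (i.e., $S = S_*$ or $S = S_g$ for $g \in \{0\} \cup \{2,\ldots,p-1\}$), any two distinct elements of the characteristic set of $S$, viewed cyclically modulo $p(2p-1)$, are separated by a cyclic distance of at least $p$. -/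
lemma aux_unit (p g t : ℕ) (hp : p.Prime) (hg : g = 0 ∨ (2 ≤ g ∧ g < p))
    (ht0 : 0 < t) (htp : t < p) (h : t * g ≡ t [MOD p]) : False := by
  haveI := Fact.mk hp
  have hp2 := hp.two_le
  have hcast : ((t * g : ℕ) : ZMod p) = ((t : ℕ) : ZMod p) :=
    (ZMod.natCast_eq_natCast_iff _ _ _).mpr h
  push_cast at hcast
  have ht : (t : ZMod p) ≠ 0 := by
    intro h0
    have hdvd := (ZMod.natCast_eq_zero_iff t p).mp h0
    have := Nat.le_of_dvd ht0 hdvd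
    omega
  have hz : (t : ZMod p) * ((g : ZMod p) - 1) = 0 := by
    rw [mul_sub, hcast, mul_one, sub_self]
  rcases mul_eq_zero.mp hz with h1 | h1
  · exact ht h1
  · have hg1 : (g : ZMod p) = ((1 : ℕ) : ZMod p) := by
      push_cast; exact sub_eq_zero.mp h1
    have hmod : g % p = 1 % p := (ZMod.natCast_eq_natCast_iff _ _ _).mp hg1
    rcases hg with rfl | ⟨hg2, hgp⟩
    · rw [Nat.zero_mod, Nat.mod_eq_of_lt (by omega)] at hmod
      omega
    · rw [Nat.mod_eq_of_lt hgp, Nat.mod_eq_of_lt (by omega)] at hmod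
      omega

lemma key (p : ℕ) (hp : p.Prime) (o : Option ℕ) (ho : c0Valid p o)
    (a b : ℕ) (hb : b < p * (2 * p - 1))
    (hma : c0Mem p (2 * p - 1) o a = true) (hmb : c0Mem p (2 * p - 1) o b = true)
    (hlt : a < b) : p ≤ min (b - a) (p * (2 * p - 1) - (b - a)) := by
  have hp2 := hp.two_le
  set q : ℕ := 2 * p - 1 with hq
  have hqp : p ≤ q := by omega
  have hd0 : 0 < b - a := by omega
  have hdpq : b - a < p * q := by
    have : a ≥ 0 := Nat.zero_le a
    omega
  cases o with
  | none =>
    simp only [c0Mem, Option.elim, istarMem, List.any_eq_true, List.mem_range,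
      decide_eq_true_eq] at hma hmb
    obtain ⟨ja, -, -, ha0⟩ := hma
    obtain ⟨jb, -, -, hb0⟩ := hmb
    have hqa : q ∣ a := Nat.dvd_of_mod_eq_zero ha0
    have hqb : q ∣ b := Nat.dvd_of_mod_eq_zero hb0
    have hqd : q ∣ b - a := Nat.dvd_sub hqb hqa
    have hqd2 : q ∣ p * q - (b - a) := Nat.dvd_sub (dvd_mul_left q p) hqd
    have h1 : q ≤ b - a := Nat.le_of_dvd hd0 hqd
    have h2 : q ≤ p * q - (b - a) := Nat.le_of_dvd (by omega) hqd2
    omega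
  | some g =>
    simp only [c0Mem, Option.elim, igMem, List.any_eq_true, List.mem_range,
      decide_eq_true_eq] at hma hmb
    obtain ⟨ja, hja, ha1, ha2⟩ := hma
    obtain ⟨jb, hjb, hb1, hb2⟩ := hmb
    have hgv : g = 0 ∨ (2 ≤ g ∧ g < p) := ho
    have hab : b = a + (b - a) := by omega
    refine le_min ?_ ?_
    · by_contra hcon
      push_neg at hcon
      set d : ℕ := b - a with hdd
      -- jb = ja + d
      have hbq : b % q = ja + d := by
        rw [hab, Nat.add_mod, ha2, Nat.mod_eq_of_lt (a := d) (by omega),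
          Nat.mod_eq_of_lt (by omega)]
      have hjbd : jb = ja + d := by rw [← hb2, hbq]
      have hbp : ((ja + d) * g) % p = (ja * g + d) % p := by
        rw [← hjbd, ← hb1, hab, Nat.add_mod, ha1, ← Nat.add_mod]
      have hme : ja * g + d * g ≡ ja * g + d [MOD p] := by
        have : (ja + d) * g = ja * g + d * g := by ring
        rw [this] at hbp
        exact hbp
      exact aux_unit p g d hp hgv hd0 hcon (Nat.ModEq.add_left_cancel' _ hme)
    · by_contra hcon
      push_neg at hcon
      set e : ℕ := p * q - (b - a) with hee
      have he0 : 0 < e := by omega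
      have hbe : b + e = a + p * q := by omega
      have h1 : (b + e) % q = ja := by
        rw [hbe]
        have : a + p * q = a + q * p := by ring
        rw [this, Nat.add_mul_mod_self_left, ha2]
      have h2 : (b + e) % q = jb + e := by
        rw [Nat.add_mod, hb2, Nat.mod_eq_of_lt (a := e) (by omega),
          Nat.mod_eq_of_lt (by omega)]
      have hjae : ja = jb + e := by rw [← h1, h2]
      have hbp : ((jb + e) * g) % p = (jb * g + e) % p := by
        have l1 : (b + e) % p = (ja * g) % p := by
          rw [hbe, Nat.add_mul_mod_self_left, ha1]
        have l2 : (b + e) % p = (jb * g + e) % p := by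
          rw [Nat.add_mod, hb1, ← Nat.add_mod]
        rw [← hjae, ← l1, l2]
      have hme : jb * g + e * g ≡ jb * g + e [MOD p] := by
        have : (jb + e) * g = jb * g + e * g := by ring
        rw [this] at hbp
        exact hbp
      exact aux_unit p g e hp hgv he0 (by omega) (Nat.ModEq.add_left_cancel' _ hme)

/-- For any sequence `S` in `C_0(p, 2p-1)`, any two distinct ones of `S`
(positions in its characteristic set, taken cyclically modulo `p(2p-1)`) are
separated by a cyclic distance of at least `p`. -/
theorem c0_min_cyclic_separation (p : ℕ) (hp : p.Prime) (o : Option ℕ)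
    (ho : c0Valid p o) (a b : ℕ) (ha : a < p * (2 * p - 1)) (hb : b < p * (2 * p - 1))
    (hma : c0Mem p (2 * p - 1) o a = true) (hmb : c0Mem p (2 * p - 1) o b = true)
    (hab : a ≠ b) :
    p ≤ min (max a b - min a b) (p * (2 * p - 1) - (max a b - min a b)) := by
  rcases hab.lt_or_gt with h | h
  · rw [max_eq_right h.le, min_eq_left h.le]
    exact key p hp o ho a b hb hma hmb h
  · rw [max_eq_left h.le, min_eq_right h.le]
    exact key p hp o ho b a ha hmb hma h
end

section
/- Let $p$ be a prime and $g \in \{2, \ldots, p-1\}$. Write the characteristic set of the CRT sequence $S_g$ of period $n = p(2p-1)$ as $\{0 = a_0 < a_1 < \cdots < a_{p-1}\} \subseteq \{0, \ldots, n-1\}$. Then $a_1 \ge p$ and $n - a_{p-1} \ge p$. -/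
/-- For a prime `p` and `g ∈ {2, …, p-1}`, every nonzero element `l` of the
characteristic set of the CRT sequence `S_g` of period `n = p(2p-1)` satisfies
`p ≤ l` and `l + p ≤ n`; i.e. the smallest nonzero element `a₁` satisfies
`a₁ ≥ p` and the largest element `a_{p-1}` satisfies `n - a_{p-1} ≥ p`. -/
theorem crt_characteristic_set_bounds (p g : ℕ) (hp : p.Prime)
    (hg2 : 2 ≤ g) (hgp : g < p) :
    ∀ l < p * (2 * p - 1), igMem p (2 * p - 1) g l = true → l ≠ 0 →
      p ≤ l ∧ l + p ≤ p * (2 * p - 1) := by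
  intro l hl hmem hl0
  rw [igMem, List.any_eq_true] at hmem
  obtain ⟨j, hj, hpred⟩ := hmem
  rw [List.mem_range] at hj
  rw [decide_eq_true_eq] at hpred
  obtain ⟨h1, h2⟩ := hpred
  have hp2 : 2 ≤ p := hp.two_le
  constructor
  · by_contra h
    push_neg at h
    have hlq : l % (2 * p - 1) = l := Nat.mod_eq_of_lt (by omega)
    have hlp : l % p = l := Nat.mod_eq_of_lt h
    have hjl : j = l := by omega
    subst hjl
    -- p ∣ l * g - l = l * (g - 1)
    have hle : j ≤ j * g := Nat.le_mul_of_pos_right j (by omega)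
    have hdvd : p ∣ j * g - j := (Nat.modEq_iff_dvd' hle).mp (by
      unfold Nat.ModEq; omega)
    have heq : j * g - j = j * (g - 1) := by
      have := Nat.mul_sub j g 1
      omega
    rw [heq] at hdvd
    rcases (Nat.Prime.dvd_mul hp).mp hdvd with hd | hd
    · have := Nat.eq_zero_of_dvd_of_lt hd h
      omega
    · have := Nat.le_of_dvd (by omega) hd
      omega
  · by_contra h
    push_neg at h
    -- l % (2p-1) = l - (p-1)*(2p-1) ≥ p, contradicting j < p
    set q := 2 * p - 1 with hq
    set r := l - (p - 1) * q with hr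
    have hlr : l = (p - 1) * q + r := by
      have hpq : p * q = (p - 1) * q + q := by
        have : p * q = (p - 1 + 1) * q := by congr 1; omega
        rw [this, Nat.add_mul]; omega
      omega
    have hrlt : r < q := by
      have hpq : p * q = (p - 1) * q + q := by
        have : p * q = (p - 1 + 1) * q := by congr 1; omega
        rw [this, Nat.add_mul]; omega
      omega
    have : l % q = r := by
      rw [hlr, Nat.add_comm, Nat.add_mul_mod_self_right, Nat.mod_eq_of_lt hrlt]
    have hrp : p ≤ r := by
      have hpq : p * q = (p - 1) * q + q := by
        have : p * q = (p - 1 + 1) * q := by congr 1; omega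
        rw [this, Nat.add_mul]; omega
      omega
    omega
end
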